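/- Let n ≥ 1 and q ∈ ℂ with q ≠ 0 and q^j ≠ 1 for all 1 ≤ j ≤ n-1. Let T_q be the n×n lower-triangular Toeplitz matrix with entries 1/(q;q)_{i-j} for i ≥ j and 0 otherwise, and let D_q be the diagonal matrix with entries q^i on the diagonal. Then (T_q)^{-1} = D_{q^{-1}} T_{q^{-1}} D_q. -/
import Mathlib


noncomputable def qPoch (z q : ℂ) (n : ℕ) : ℂ := ∏ i ∈ Finset.range n, (1 - z * q ^ i)

lemma qPoch_zero (z q : ℂ) : qPoch z q 0 = 1 := by simp [qPoch]

lemma qPoch_succ (z q : ℂ) (n : ℕ) : qPoch z q (n+1) = qPoch z q n * (1 - z * q ^ n) :=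
  Finset.prod_range_succ _ _

lemma qPoch_ne_zero (q : ℂ) (d m : ℕ) (hm : m ≤ d)
    (hq : ∀ j : ℕ, 1 ≤ j → j ≤ d → q ^ j ≠ 1) : qPoch q q m ≠ 0 := by
  unfold qPoch
  rw [Finset.prod_ne_zero_iff]
  intro i hi h0
  have hi' := Finset.mem_range.mp hi
  exact hq (i+1) (by omega) (by omega) (by rw [pow_succ']; linear_combination -h0)

lemma qPoch_inv_ne_zero (q : ℂ) (d m : ℕ) (hm : m ≤ d)
    (hq : ∀ j : ℕ, 1 ≤ j → j ≤ d → q ^ j ≠ 1) : qPoch q⁻¹ q⁻¹ m ≠ 0 := by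
  unfold qPoch
  rw [Finset.prod_ne_zero_iff]
  intro i hi h0
  have hi' := Finset.mem_range.mp hi
  have h1 : q⁻¹ ^ (i+1) = 1 := by rw [pow_succ']; linear_combination -h0
  rw [inv_pow, inv_eq_one] at h1
  exact hq (i+1) (by omega) (by omega) h1

lemma first_id (A x : ℂ) (hA : A ≠ 0) (hx : (1:ℂ) - x ≠ 0) :
    (1 - x) * (1/(A*(1-x))) = 1/A := by
  field_simp

lemma last_id (B z : ℂ) (hB : B ≠ 0) (hz0 : z ≠ 0) (hz : z - 1 ≠ 0) :
    (1 - z) * (z⁻¹/(B*(1-z⁻¹))) = -(1/B) := by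
  have h : (1:ℂ) - z⁻¹ = (z - 1) / z := by field_simp
  rw [h]; field_simp; ring

lemma mid_id (A B x z : ℂ) (hA : A ≠ 0) (hB : B ≠ 0) (hx : (1:ℂ) - x ≠ 0) (hz0 : z ≠ 0)
    (hz : z - 1 ≠ 0) :
    (1 - x*z) * (z⁻¹ / ((A*(1-x)) * (B*(1-z⁻¹)))) = 1/(B*(1-z⁻¹)*A) - 1/(B*(A*(1-x))) := by
  have h : (1:ℂ) - z⁻¹ = (z - 1) / z := by field_simp
  rw [h]; field_simp; ring

lemma key_sum (q : ℂ) (hq0 : q ≠ 0) (d : ℕ) (hd : 1 ≤ d)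
    (hq : ∀ j : ℕ, 1 ≤ j → j ≤ d → q ^ j ≠ 1) :
    ∑ m ∈ Finset.range (d+1), q⁻¹ ^ m / (qPoch q q (d-m) * qPoch q⁻¹ q⁻¹ m) = 0 := by
  set v : ℕ → ℂ := fun m =>
    if 1 ≤ m ∧ m ≤ d then 1 / (qPoch q⁻¹ q⁻¹ (m-1) * qPoch q q (d-m)) else 0 with hv
  have hvpos : ∀ m, 1 ≤ m → m ≤ d →
      v m = 1 / (qPoch q⁻¹ q⁻¹ (m-1) * qPoch q q (d-m)) := by
    intro m h1 h2
    simp only [hv]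
    rw [if_pos ⟨h1, h2⟩]
  have hvneg : ∀ m, ¬(1 ≤ m ∧ m ≤ d) → v m = 0 := by
    intro m h
    simp only [hv]
    rw [if_neg h]
  have hqd : (1 : ℂ) - q ^ d ≠ 0 := sub_ne_zero.mpr (fun h => hq d hd le_rfl h.symm)
  have hterm : ∀ m ∈ Finset.range (d+1),
      (1 - q ^ d) * (q⁻¹ ^ m / (qPoch q q (d-m) * qPoch q⁻¹ q⁻¹ m)) = v (m+1) - v m := by
    intro m hmr
    have hm' : m ≤ d := by have := Finset.mem_range.mp hmr; omega
    by_cases hm0 : m = 0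
    · subst hm0
      obtain ⟨e, he⟩ : ∃ e, d = e + 1 := ⟨d - 1, by omega⟩
      have hPe : qPoch q q e ≠ 0 := qPoch_ne_zero q d e (by omega) hq
      have hx : (1 : ℂ) - q * q ^ e ≠ 0 := by
        intro h
        exact hq (e+1) (by omega) (by omega) (by rw [pow_succ']; linear_combination -h)
      rw [hvpos 1 le_rfl (by omega), hvneg 0 (by omega)]
      simp only [pow_zero, Nat.sub_zero, Nat.sub_self, qPoch_zero, mul_one, one_mul, sub_zero]
      rw [show d - 1 = e from by omega,
        show qPoch q q d = qPoch q q e * (1 - q * q ^ e) from by rw [he, qPoch_succ],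
        show q ^ d = q * q ^ e from by rw [he, pow_succ']]
      exact first_id _ _ hPe hx
    · by_cases hmd : m = d
      · obtain ⟨f, hf⟩ : ∃ f, d = f + 1 := ⟨d - 1, by omega⟩
        have hQf : qPoch q⁻¹ q⁻¹ f ≠ 0 := qPoch_inv_ne_zero q d f (by omega) hq
        have hz0 : (q : ℂ) ^ d ≠ 0 := pow_ne_zero _ hq0
        have hz1 : (q : ℂ) ^ d - 1 ≠ 0 := sub_ne_zero.mpr (hq d hd le_rfl)
        rw [hmd, hvneg (d+1) (by omega), hvpos d hd le_rfl]
        rw [show d - d = 0 from by omega, qPoch_zero, show d - 1 = f from by omega,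
          one_mul, mul_one, zero_sub]
        rw [show qPoch q⁻¹ q⁻¹ d = qPoch q⁻¹ q⁻¹ f * (1 - q⁻¹ * q⁻¹ ^ f) from by
              rw [hf, qPoch_succ],
          show (q : ℂ)⁻¹ * q⁻¹ ^ f = (q ^ d)⁻¹ from by rw [← pow_succ', ← hf, inv_pow],
          show (q : ℂ)⁻¹ ^ d = (q ^ d)⁻¹ from inv_pow q d]
        exact last_id _ _ hQf hz0 hz1
      · -- middle: 1 ≤ m ≤ d - 1
        obtain ⟨e, he⟩ : ∃ e, d - m = e + 1 := ⟨d - m - 1, by omega⟩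
        obtain ⟨f, hf⟩ : ∃ f, m = f + 1 := ⟨m - 1, by omega⟩
        have hPe : qPoch q q e ≠ 0 := qPoch_ne_zero q d e (by omega) hq
        have hQf : qPoch q⁻¹ q⁻¹ f ≠ 0 := qPoch_inv_ne_zero q d f (by omega) hq
        have hx : (1 : ℂ) - q * q ^ e ≠ 0 := by
          intro h
          exact hq (e+1) (by omega) (by omega) (by rw [pow_succ']; linear_combination -h)
        have hz0 : (q : ℂ) ^ m ≠ 0 := pow_ne_zero _ hq0
        have hz1 : (q : ℂ) ^ m - 1 ≠ 0 := sub_ne_zero.mpr (hq m (by omega) hm')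
        rw [hvpos (m+1) (by omega) (by omega), hvpos m (by omega) hm']
        rw [show d - (m+1) = e from by omega, show (m+1) - 1 = m from by omega,
          show m - 1 = f from by omega]
        rw [show qPoch q q (d - m) = qPoch q q e * (1 - q * q ^ e) from by rw [he, qPoch_succ],
          show qPoch q⁻¹ q⁻¹ m = qPoch q⁻¹ q⁻¹ f * (1 - q⁻¹ * q⁻¹ ^ f) from by
            rw [hf, qPoch_succ],
          show (q : ℂ)⁻¹ * q⁻¹ ^ f = (q ^ m)⁻¹ from by rw [← pow_succ', ← hf, inv_pow],
          show (q : ℂ)⁻¹ ^ m = (q ^ m)⁻¹ from inv_pow q m,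
          show q ^ d = (q * q ^ e) * q ^ m from by
            rw [show d = (e + 1) + m from by omega, pow_add, pow_succ']]
        exact mid_id _ _ _ _ hPe hQf hx hz0 hz1
  have h2 : ∑ m ∈ Finset.range (d+1), (v (m+1) - v m) = v (d+1) - v 0 :=
    Finset.sum_range_sub v (d+1)
  have h3 : (1 - q ^ d) *
      (∑ m ∈ Finset.range (d+1), q⁻¹ ^ m / (qPoch q q (d-m) * qPoch q⁻¹ q⁻¹ m)) = 0 := by
    rw [Finset.mul_sum, Finset.sum_congr rfl hterm, h2,
      hvneg (d+1) (by omega), hvneg 0 (by omega)]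
    ring
  rcases mul_eq_zero.mp h3 with h | h
  · exact absurd h hqd
  · exact h

theorem stmt8 (n : ℕ) (hn : 1 ≤ n) (q : ℂ) (hq0 : q ≠ 0)
    (hq : ∀ j : ℕ, 1 ≤ j → j ≤ n - 1 → q ^ j ≠ 1)
    (T T' : Matrix (Fin n) (Fin n) ℂ)
    (hT : ∀ i j : Fin n, T i j =
      if (j : ℕ) ≤ (i : ℕ) then 1 / qPoch q q ((i : ℕ) - (j : ℕ)) else 0)
    (hT' : ∀ i j : Fin n, T' i j =
      if (j : ℕ) ≤ (i : ℕ) then 1 / qPoch q⁻¹ q⁻¹ ((i : ℕ) - (j : ℕ)) else 0) :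
    T⁻¹ = (Matrix.diagonal fun i : Fin n => q⁻¹ ^ (i : ℕ)) * T' *
      (Matrix.diagonal fun i : Fin n => q ^ (i : ℕ)) := by
  apply Matrix.inv_eq_right_inv
  ext i j
  have hmul : (T * ((Matrix.diagonal fun i : Fin n => q⁻¹ ^ (i : ℕ)) * T' *
      Matrix.diagonal fun i : Fin n => q ^ (i : ℕ))) i j
      = ∑ k : Fin n, T i k * (q⁻¹ ^ (k : ℕ) * T' k j * q ^ (j : ℕ)) := by
    rw [Matrix.mul_apply]
    simp only [Matrix.mul_diagonal, Matrix.diagonal_mul]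
  rw [hmul]
  set g : ℕ → ℂ := fun k =>
    if (j : ℕ) ≤ k ∧ k ≤ (i : ℕ) then
      (1 / qPoch q q ((i : ℕ) - k)) * (q⁻¹ ^ k * (1 / qPoch q⁻¹ q⁻¹ (k - (j : ℕ))) * q ^ (j : ℕ))
    else 0 with hg
  have hsum1 : ∑ k : Fin n, T i k * (q⁻¹ ^ (k : ℕ) * T' k j * q ^ (j : ℕ))
      = ∑ k : Fin n, g (k : ℕ) := by
    refine Finset.sum_congr rfl fun k _ => ?_
    rw [hT, hT']
    simp only [hg]
    by_cases h1 : (j : ℕ) ≤ (k : ℕ) <;> by_cases h2 : (k : ℕ) ≤ (i : ℕ)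
    · rw [if_pos h2, if_pos h1, if_pos ⟨h1, h2⟩]
    · rw [if_neg h2, if_neg (by omega : ¬((j:ℕ) ≤ (k:ℕ) ∧ (k:ℕ) ≤ (i:ℕ)))]; ring
    · rw [if_neg h1, if_pos h2, if_neg (by omega : ¬((j:ℕ) ≤ (k:ℕ) ∧ (k:ℕ) ≤ (i:ℕ)))]; ring
    · rw [if_neg h1, if_neg h2, if_neg (by omega : ¬((j:ℕ) ≤ (k:ℕ) ∧ (k:ℕ) ≤ (i:ℕ)))]; ring
  rw [hsum1, Fin.sum_univ_eq_sum_range]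
  rcases lt_trichotomy (i : ℕ) (j : ℕ) with hij | hij | hij
  · -- above diagonal: everything is zero
    have hz : ∀ k ∈ Finset.range n, g k = 0 := by
      intro k _
      simp only [hg]
      rw [if_neg (by omega)]
    rw [Finset.sum_eq_zero hz, Matrix.one_apply_ne (by intro h; rw [h] at hij; omega)]
  · -- diagonal
    have hij' : i = j := Fin.ext hij
    subst hij'
    rw [Matrix.one_apply_eq]
    have hji : (i : ℕ) < n := i.isLt
    rw [Finset.sum_eq_single (i : ℕ)]
    · simp only [hg]
      rw [if_pos ⟨le_rfl, le_rfl⟩]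
      simp only [Nat.sub_self, qPoch_zero, one_div, inv_one, one_mul, mul_one, inv_pow]
      exact inv_mul_cancel₀ (pow_ne_zero _ hq0)
    · intro k _ hk
      simp only [hg]
      rw [if_neg (by omega)]
    · intro h
      exact absurd (Finset.mem_range.mpr hji) h
  · -- below diagonal
    rw [Matrix.one_apply_ne (by intro h; rw [h] at hij; omega)]
    set d : ℕ := (i : ℕ) - (j : ℕ) with hdd
    have hd1 : 1 ≤ d := by omega
    have hdn : d ≤ n - 1 := by have := i.isLt; omega
    have hq' : ∀ j : ℕ, 1 ≤ j → j ≤ d → q ^ j ≠ 1 := fun a ha1 ha2 => hq a ha1 (by omega)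
    have hsub : Finset.Icc (j : ℕ) (i : ℕ) ⊆ Finset.range n := by
      intro x hx
      rw [Finset.mem_Icc] at hx
      rw [Finset.mem_range]
      have := i.isLt; omega
    have hvan : ∀ x ∈ Finset.range n, x ∉ Finset.Icc (j : ℕ) (i : ℕ) → g x = 0 := by
      intro x _ hx
      rw [Finset.mem_Icc] at hx
      simp only [hg]
      rw [if_neg hx]
    rw [← Finset.sum_subset hsub hvan, ← Finset.Ico_add_one_right_eq_Icc, Finset.sum_Ico_eq_sum_range]
    have hrange : (i : ℕ) + 1 - (j : ℕ) = d + 1 := by omega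
    rw [hrange]
    have hjj : q⁻¹ ^ (j : ℕ) * q ^ (j : ℕ) = 1 := by
      rw [inv_pow]; exact inv_mul_cancel₀ (pow_ne_zero _ hq0)
    have hterm : ∀ m ∈ Finset.range (d+1),
        g ((j : ℕ) + m) = q⁻¹ ^ m / (qPoch q q (d - m) * qPoch q⁻¹ q⁻¹ m) := by
      intro m hmr
      have hm' : m ≤ d := by have := Finset.mem_range.mp hmr; omega
      simp only [hg]
      rw [if_pos (by omega : (j:ℕ) ≤ (j:ℕ) + m ∧ (j:ℕ) + m ≤ (i:ℕ))]
      rw [show (i : ℕ) - ((j : ℕ) + m) = d - m from by omega,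
        show (j : ℕ) + m - (j : ℕ) = m from by omega, pow_add]
      simp only [one_div, div_eq_mul_inv, mul_inv]
      linear_combination (qPoch q q (d - m))⁻¹ * (qPoch q⁻¹ q⁻¹ m)⁻¹ * q⁻¹ ^ m * hjj
    rw [Finset.sum_congr rfl hterm]
    exact key_sum q hq0 d hd1 hq'
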